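/- arXiv:1712.07444 — 2 statements merged into one kernel-verified Lean document; each statement's English description precedes it below -/
import Mathlib

section
/- Let Q be a finite quiver, a : i → j an arrow, C(a) = KQe_i/KQa, and X a representation of Q. Then Hom(C(a), X) = 0 if and only if the linear map X_a : X_i → X_j is injective, and Ext¹(C(a), X) = 0 if and only if X_a is surjective. -/
open Quiver

universe w v u

/-- A representation of a quiver `V` over a field `K`: a vector space at each vertex
and a linear map for each arrow. -/
structure QRep (K : Type u) [Field K] (V : Type v) [Quiver.{v} V] where
  space : V → Type w
  [isAddCommGroup : ∀ i, AddCommGroup (space i)]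
  [isModule : ∀ i, Module K (space i)]
  map : ∀ {i j : V}, (i ⟶ j) → (space i →ₗ[K] space j)

attribute [instance] QRep.isAddCommGroup QRep.isModule

/-- A morphism of quiver representations. -/
structure QRepHom {K : Type u} [Field K] {V : Type v} [Quiver.{v} V]
    (X Y : QRep.{w} K V) where
  app : ∀ i, X.space i →ₗ[K] Y.space i
  comm : ∀ {i j : V} (a : i ⟶ j), (Y.map a).comp (app i) = (app j).comp (X.map a)

/-- The projective representation `KQe_i`: at vertex `j` it has basis the paths `i ⟶ j`,
and arrows act by postcomposition. -/
noncomputable def projRep (K : Type u) [Field K] (V : Type v) [Quiver.{v} V] (i : V) :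
    QRep.{max u v} K V where
  space j := Path i j →₀ K
  map a := Finsupp.lmapDomain K K (fun p => p.cons a)

/-- Right multiplication by an arrow `a : i ⟶ j`, as a morphism `KQe_j → KQe_i`. -/
noncomputable def rmulArrow {K : Type u} [Field K] {V : Type v} [Quiver.{v} V]
    {i j : V} (a : i ⟶ j) : QRepHom (projRep K V j) (projRep K V i) where
  app k := Finsupp.lmapDomain K K (fun p : Path j k => (a.toPath).comp p)
  comm := by
    intro k l b
    refine Finsupp.lhom_ext fun p c => ?_
    change Finsupp.mapDomain _ (Finsupp.mapDomain _ (Finsupp.single p c)) =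
      Finsupp.mapDomain _ (Finsupp.mapDomain _ (Finsupp.single p c))
    simp [Finsupp.mapDomain_single, Quiver.Path.comp_cons]

/-- The cokernel representation of a morphism of representations. -/
noncomputable def cokerRep {K : Type u} [Field K] {V : Type v} [Quiver.{v} V]
    {F X : QRep.{w} K V} (f : QRepHom F X) : QRep.{w} K V where
  space i := X.space i ⧸ LinearMap.range (f.app i)
  map {i j} a := Submodule.mapQ _ _ (X.map a) (by
    rintro x ⟨y, rfl⟩
    exact ⟨F.map a y, by
      rw [← LinearMap.comp_apply, ← f.comm, LinearMap.comp_apply]⟩)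

/-- The projection onto the cokernel representation. -/
noncomputable def cokerProj {K : Type u} [Field K] {V : Type v} [Quiver.{v} V]
    {F X : QRep.{w} K V} (f : QRepHom F X) : QRepHom X (cokerRep f) where
  app i := (LinearMap.range (f.app i)).mkQ
  comm {i j} a := Submodule.mapQ_mkQ _ _ (h := by
    rintro x ⟨y, rfl⟩
    exact ⟨F.map a y, by
      rw [← LinearMap.comp_apply, ← f.comm, LinearMap.comp_apply]⟩)

/-- The representation `C(a) = KQe_{t(a)}/KQa` for an arrow `a : i ⟶ j`. -/
noncomputable def Ca {K : Type u} [Field K] {V : Type v} [Quiver.{v} V]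
    {i j : V} (a : i ⟶ j) : QRep.{max u v} K V :=
  cokerRep (rmulArrow (K := K) a)

/-- `Hom(A,B) = 0` in the category of representations. -/
def HomVanishes {K : Type u} [Field K] {V : Type v} [Quiver.{v} V]
    (A B : QRep.{w} K V) : Prop :=
  ∀ θ : QRepHom A B, ∀ (k : V) (x : A.space k), θ.app k x = 0

/-- `u, v` form a short exact sequence `0 → X → E → Z → 0` of representations. -/
def IsSES {K : Type u} [Field K] {V : Type v} [Quiver.{v} V]
    {X E Z : QRep.{w} K V} (u : QRepHom X E) (v : QRepHom E Z) : Prop :=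
  ∀ k : V, Function.Injective (u.app k) ∧ Function.Surjective (v.app k) ∧
    LinearMap.range (u.app k) = LinearMap.ker (v.app k)

/-- `Ext¹(Z,X) = 0`: every short exact sequence `0 → X → E → Z → 0` of
representations splits. -/
def ExtVanishes {K : Type u} [Field K] {V : Type v} [Quiver.{v} V]
    (Z X : QRep.{w} K V) : Prop :=
  ∀ (E : QRep.{w} K V) (u : QRepHom X E) (v : QRepHom E Z), IsSES u v →
    ∃ s : QRepHom Z E, ∀ k : V, (v.app k).comp (s.app k) = LinearMap.id

/-!
A morphism out of `C(a) = KQe_i/KQa` is determined by the image `x ∈ X_i` of the class `ē_i`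
of `e_i`, and every `x` with `X_a x = 0` occurs (Yoneda for `KQe_i` and the universal property of the
cokernel), so `Hom(C(a), X) ≅ ker X_a`.

If `X_a` is surjective, an extension `0 → X → E → C(a) → 0` splits: lift `ē_i` to `ε ∈ E_i`,
subtract an element of `X_i` to get `E_a ε = 0`, and send `ē_i` to `ε`.
Conversely, for `z ∈ X_j` consider `X ⊕ C(a)` with the arrow `a` twisted by a map
`C(a)_i → X_j` sending `ē_i` (which is nonzero) to `z`: a splitting
`ζ ↦ (σ ζ, ζ)` satisfies `X_a (σ ē_i) + z = 0`.
-/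

section

variable {K : Type u} [Field K] {V : Type v} [Quiver.{v} V]

namespace QRep

def pathMap (X : QRep.{w} K V) {i : V} : ∀ {k : V}, Path i k → (X.space i →ₗ[K] X.space k)
  | _, Path.nil => LinearMap.id
  | _, Path.cons p b => X.map b ∘ₗ X.pathMap p

@[simp]
lemma pathMap_cons (X : QRep.{w} K V) {i k l : V} (p : Path i k) (b : k ⟶ l) :
    X.pathMap (p.cons b) = X.map b ∘ₗ X.pathMap p :=
  rfl

end QRep

namespace QRepHom

variable {X Y Z : QRep.{w} K V}

@[ext]
lemma ext {f g : QRepHom X Y} (h : ∀ k, f.app k = g.app k) : f = g := by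
  cases f
  cases g
  congr
  exact funext h

lemma comm_apply (f : QRepHom X Y) {k l : V} (b : k ⟶ l) (x : X.space k) :
    Y.map b (f.app k x) = f.app l (X.map b x) :=
  LinearMap.congr_fun (f.comm b) x

lemma app_pathMap (f : QRepHom X Y) {k l : V} (p : Path k l) (x : X.space k) :
    f.app l (X.pathMap p x) = Y.pathMap p (f.app k x) := by
  induction p with
  | nil => rfl
  | cons p b ih =>
    simp only [QRep.pathMap_cons, LinearMap.comp_apply, ← f.comm_apply, ih]

protected def id (X : QRep.{w} K V) : QRepHom X X :=
  ⟨fun _ => LinearMap.id, fun _ => rfl⟩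

def comp (g : QRepHom Y Z) (f : QRepHom X Y) : QRepHom X Z where
  app k := g.app k ∘ₗ f.app k
  comm b := by
    rw [← LinearMap.comp_assoc, g.comm, LinearMap.comp_assoc, f.comm, LinearMap.comp_assoc]

instance : Zero (QRepHom X Y) :=
  ⟨⟨fun _ => 0, fun _ => by simp⟩⟩

@[simp] lemma id_app (k : V) : (QRepHom.id X).app k = LinearMap.id := rfl

@[simp] lemma comp_app (g : QRepHom Y Z) (f : QRepHom X Y) (k : V) :
    (g.comp f).app k = g.app k ∘ₗ f.app k := rfl

@[simp] lemma zero_app (k : V) : (0 : QRepHom X Y).app k = 0 := rfl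

end QRepHom

def cokerLift {F X Y : QRep.{w} K V} (f : QRepHom F X) (φ : QRepHom X Y)
    (h : ∀ k, LinearMap.range (f.app k) ≤ LinearMap.ker (φ.app k)) :
    QRepHom (cokerRep f) Y where
  app k := (LinearMap.range (f.app k)).liftQ (φ.app k) (h k)
  comm b := Submodule.linearMap_qext _ (LinearMap.ext (φ.comm_apply b))

variable (K) in
noncomputable def projRepGen (i : V) :
    (projRep K V i).space i :=
  Finsupp.single Path.nil 1

lemma projRep_pathMap_gen {i k : V} (p : Path i k) :
    (projRep K V i).pathMap p (projRepGen K i) = Finsupp.single p 1 := by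
  induction p with
  | nil => rfl
  | cons p b ih =>
    change Finsupp.mapDomain (fun q => q.cons b) ((projRep K V i).pathMap p _) = _
    rw [ih]
    exact Finsupp.mapDomain_single

lemma projRep_linearMap_ext {M : Type*} [AddCommGroup M] [Module K M] {i k : V}
    {f g : (projRep K V i).space k →ₗ[K] M}
    (h : ∀ p : Path i k, f ((projRep K V i).pathMap p (projRepGen K i)) =
      g ((projRep K V i).pathMap p (projRepGen K i))) : f = g :=
  Finsupp.basisSingleOne.ext fun p => by
    have hp := h p
    rwa [projRep_pathMap_gen] at hp

lemma projRep_hom_ext {Y : QRep.{max u v} K V} {i : V} {φ ψ : QRepHom (projRep K V i) Y}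
    (h : φ.app i (projRepGen K i) = ψ.app i (projRepGen K i)) : φ = ψ := by
  ext k : 1
  exact projRep_linearMap_ext fun p => by rw [φ.app_pathMap, ψ.app_pathMap, h]

noncomputable def projRepLift (Y : QRep.{max u v} K V) {i : V} (y : Y.space i) :
    QRepHom (projRep K V i) Y where
  app k := Finsupp.linearCombination K (fun p : Path i k => Y.pathMap p y)
  comm b := Finsupp.lhom_ext fun p c => by
    change Y.map b (Finsupp.linearCombination K _ (Finsupp.single p c)) =
      Finsupp.linearCombination K _ (Finsupp.mapDomain _ (Finsupp.single p c))
    rw [Finsupp.mapDomain_single, Finsupp.linearCombination_single,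
      Finsupp.linearCombination_single, map_smul]
    rfl

@[simp]
lemma projRepLift_app_gen (Y : QRep.{max u v} K V) {i : V} (y : Y.space i) :
    (projRepLift Y y).app i (projRepGen K i) = y :=
  (Finsupp.linearCombination_single K 1 Path.nil).trans (one_smul K y)

lemma rmulArrow_app_gen {i j : V} (a : i ⟶ j) :
    (rmulArrow a).app j (projRepGen K j) = (projRep K V i).map a (projRepGen K i) := by
  change Finsupp.mapDomain _ (Finsupp.single _ _) = Finsupp.mapDomain _ (Finsupp.single _ _)
  rw [Finsupp.mapDomain_single, Finsupp.mapDomain_single]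
  rfl

namespace Ca

variable {i j : V} (a : i ⟶ j)

noncomputable def proj : QRepHom (projRep K V i) (Ca (K := K) a) :=
  cokerProj (rmulArrow a)

noncomputable def gen : (Ca (K := K) a).space i :=
  (proj a).app i (projRepGen K i)

lemma map_gen : (Ca (K := K) a).map a (gen a) = 0 := by
  rw [gen, (proj a).comm_apply, ← rmulArrow_app_gen]
  exact (Submodule.Quotient.mk_eq_zero _).2 (LinearMap.mem_range_self _ _)

lemma gen_ne_zero : gen (K := K) a ≠ 0 := by
  intro h
  obtain ⟨w, hw⟩ := (Submodule.Quotient.mk_eq_zero _).1 h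
  have hnil : (Path.nil : Path i i) ∉ Set.range (a.toPath.comp : Path j i → Path i i) := by
    rintro ⟨p, hp⟩
    simpa [Path.length_comp] using congrArg Path.length hp
  have hw' := Finsupp.ext_iff.1 hw Path.nil
  rw [projRepGen, Finsupp.single_eq_same] at hw'
  exact one_ne_zero (hw'.symm.trans (Finsupp.mapDomain_of_notMem_range _ _ hnil))

lemma hom_ext {Y : QRep.{max u v} K V} {θ θ' : QRepHom (Ca (K := K) a) Y}
    (h : θ.app i (gen a) = θ'.app i (gen a)) : θ = θ' := by
  have hπ : θ.comp (proj a) = θ'.comp (proj a) := projRep_hom_ext h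
  ext k : 1
  exact Submodule.linearMap_qext _ (congrArg (QRepHom.app · k) hπ)

noncomputable def lift (Y : QRep.{max u v} K V) (y : Y.space i) (hy : Y.map a y = 0) :
    QRepHom (Ca (K := K) a) Y :=
  cokerLift (rmulArrow a) (projRepLift Y y) fun k => by
    rw [LinearMap.range_le_ker_iff]
    refine projRep_linearMap_ext fun p => ?_
    rw [LinearMap.comp_apply, QRepHom.app_pathMap, QRepHom.app_pathMap, rmulArrow_app_gen,
      ← QRepHom.comm_apply, projRepLift_app_gen, hy, map_zero, LinearMap.zero_apply]

@[simp]
lemma lift_app_gen (Y : QRep.{max u v} K V) (y : Y.space i) (hy : Y.map a y = 0) :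
    (lift a Y y hy).app i (gen a) = y :=
  projRepLift_app_gen Y y

end Ca

section Twisted

variable {X Z : QRep.{w} K V}
  (δ : ∀ {k l : V}, (k ⟶ l) → Z.space k →ₗ[K] X.space l)

/-- `X ⊕ Z` with arrows acting by `[[X_b, δ_b], [0, Z_b]]`: the extension of `Z` by `X`
with cocycle `δ`. -/
abbrev twistedRep : QRep.{w} K V where
  space k := X.space k × Z.space k
  map b := ((X.map b).coprod (δ b)).prod (Z.map b ∘ₗ LinearMap.snd K _ _)

def twistedInl : QRepHom X (twistedRep δ) where
  app _ := LinearMap.inl K _ _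
  comm b := by ext x <;> simp

def twistedSnd : QRepHom (twistedRep δ) Z where
  app _ := LinearMap.snd K _ _
  comm _ := rfl

lemma isSES_twisted : IsSES (twistedInl δ) (twistedSnd δ) := fun _ =>
  ⟨LinearMap.inl_injective, LinearMap.snd_surjective, LinearMap.range_inl K _ _⟩

lemma mem_range_of_twisted_section (s : QRepHom Z (twistedRep δ))
    (hs : ∀ k, (twistedSnd δ).app k ∘ₗ s.app k = LinearMap.id) {k l : V} (b : k ⟶ l)
    {ζ : Z.space k} (hζ : Z.map b ζ = 0) : δ b ζ ∈ LinearMap.range (X.map b) := by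
  have hsnd : (s.app k ζ).2 = ζ := LinearMap.congr_fun (hs k) ζ
  have hmap : (twistedRep δ).map b (s.app k ζ) = 0 := by rw [s.comm_apply, hζ, map_zero]
  refine ⟨-(s.app k ζ).1, ?_⟩
  have hfst : X.map b (s.app k ζ).1 + δ b (s.app k ζ).2 = 0 := congrArg Prod.fst hmap
  rw [hsnd] at hfst
  rw [map_neg, neg_eq_iff_add_eq_zero, hfst]

end Twisted

lemma IsSES.exists_map_eq_zero_of_surjective {X E Z : QRep.{w} K V} {u : QRepHom X E} {v : QRepHom E Z} (h : IsSES u v) {k l : V}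
    {b : k ⟶ l} (hX : Function.Surjective (X.map b)) {ε : E.space k}
    (hε : Z.map b (v.app k ε) = 0) : ∃ ε', v.app k ε' = v.app k ε ∧ E.map b ε' = 0 := by
  have hker : E.map b ε ∈ LinearMap.ker (v.app l) := by rw [LinearMap.mem_ker, ← v.comm_apply, hε]
  rw [← (h l).2.2] at hker
  obtain ⟨x, hx⟩ := hker
  obtain ⟨y, rfl⟩ := hX x
  have hvu : v.app k (u.app k y) = 0 := by
    rw [← LinearMap.mem_ker, ← (h k).2.2]
    exact LinearMap.mem_range_self _ y
  refine ⟨ε - u.app k y, ?_, ?_⟩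
  · rw [map_sub, hvu, sub_zero]
  · rw [map_sub, u.comm_apply, hx, sub_self]

section

variable {i j : V} (a : i ⟶ j) (X : QRep.{max u v} K V)

theorem homVanishes_Ca_iff : HomVanishes (Ca (K := K) a) X ↔ Function.Injective (X.map a) := by
  rw [← LinearMap.ker_eq_bot, LinearMap.ker_eq_bot']
  constructor
  · intro hv x hx
    simpa using hv (Ca.lift a X x hx) i (Ca.gen a)
  · intro hinj θ k x
    have hθ : θ = 0 := Ca.hom_ext a (hinj _ (by rw [θ.comm_apply, Ca.map_gen, map_zero]))
    rw [hθ, QRepHom.zero_app, LinearMap.zero_apply]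

theorem extVanishes_Ca_of_surjective (hX : Function.Surjective (X.map a)) :
    ExtVanishes (Ca (K := K) a) X := by
  intro E u v hses
  obtain ⟨ε, hε⟩ := (hses i).2.1 (Ca.gen a)
  obtain ⟨ε', hε'v, hε'a⟩ :=
    hses.exists_map_eq_zero_of_surjective hX (ε := ε) (by rw [hε, Ca.map_gen])
  have hs : v.comp (Ca.lift a E ε' hε'a) = QRepHom.id _ :=
    Ca.hom_ext a (by simp [hε'v, hε])
  exact ⟨_, fun k => congrArg (QRepHom.app · k) hs⟩

theorem surjective_of_extVanishes_Ca (hext : ExtVanishes (Ca (K := K) a) X) :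
    Function.Surjective (X.map a) := by
  classical
  intro z
  obtain ⟨φ, hφ⟩ := Module.Projective.exists_dual_eq_one K (Ca.gen_ne_zero (K := K) a)
  -- `δ a` sends `Ca.gen a` to `z`; its values on the other arrows play no role.
  let δ : ∀ {k l : V}, (k ⟶ l) → (Ca (K := K) a).space k →ₗ[K] X.space l := fun {k l} _ =>
    (Pi.single (M := fun k => Module.Dual K ((Ca (K := K) a).space k)) i φ k).smulRight
      (Pi.single (M := X.space) j z l)
  obtain ⟨s, hs⟩ := hext _ _ _ (isSES_twisted δ)
  obtain ⟨y, hy⟩ := mem_range_of_twisted_section δ s hs a (Ca.map_gen a)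
  exact ⟨y, hy.trans (by simp [δ, hφ])⟩

end

end

/-- For an arrow `a : i → j` of a finite quiver and a finite-dimensional
representation `X`: `Hom(C(a),X) = 0` iff `X_a` is injective, and
`Ext¹(C(a),X) = 0` iff `X_a` is surjective. -/
theorem hom_ext_Ca_iff {K : Type u} [Field K] {V : Type v} [Quiver.{v} V]
    [Fintype V] [∀ i j : V, Fintype (i ⟶ j)] {i j : V} (a : i ⟶ j)
    (X : QRep.{max u v} K V) [∀ k, FiniteDimensional K (X.space k)] :
    (HomVanishes (Ca (K := K) a) X ↔ Function.Injective (X.map a)) ∧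
    (ExtVanishes (Ca (K := K) a) X ↔ Function.Surjective (X.map a)) :=
  ⟨homVanishes_Ca_iff a X,
    ⟨surjective_of_extVanishes_Ca a X, extVanishes_Ca_of_surjective a X⟩⟩
end

section
/- Let Q be a finite quiver, I ⊆ Q_1 a set of arrows such that Q has no oriented I-cycles (no cyclic word in arrows of Q_1 and formal inverses of arrows of I, without immediate cancellations, forming a closed walk). Then I can be enumerated I = {a_1, …, a_s} such that for all i ≤ j, every path from t(a_j) to h(a_i) is of the form qa_j or a_iq for some path q. -/
/-!
Say that `x ∈ I` links to `y ∈ I` if some path from `t(x)` to `h(y)` neither starts with `x`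
nor ends with `y`. An enumeration as required is exactly a linear extension of the reverse of
this relation, so it suffices that the relation has no cycles. A cycle `x₀, x₁, …, x_m = x₀` of
links with witnessing paths `p_i` gives the closed walk `p₀ x₁⁻¹ p₁ x₂⁻¹ ⋯ p_{m-1} x₀⁻¹`, which has
no immediate cancellation precisely because no `p_i` starts with `x_i` or ends with `x_{i+1}`:
an oriented `I`-cycle.
-/

open Quiver

universe v

/-- An oriented `A`-cycle in a quiver: a cyclic word `w_0 w_1 ⋯ w_{n-1}`, `n ≥ 1`
(indices mod `n`), each letter either an arrow of the quiver or a formal inverse of an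
arrow in `A`, consecutive letters not inverse to each other, and `t(w_k) = h(w_{k+1})`.
Here `vert k = h(w_k)`, so the letter `w_k` goes from `vert (k+1)` to `vert k`:
it is either an arrow `vert (k+1) ⟶ vert k`, or the formal inverse of an arrow
`vert k ⟶ vert (k+1)` belonging to `A`. -/
structure OrientedCycle {V : Type v} [Quiver.{v+1} V]
    (A : ∀ i j : V, Set (i ⟶ j)) where
  n : ℕ
  npos : 0 < n
  vert : ZMod n → V
  letter : ∀ k : ZMod n,
    (vert (k + 1) ⟶ vert k) ⊕ {a : vert k ⟶ vert (k + 1) // a ∈ A _ _}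
  reduced₁ : ∀ (k : ZMod n) (x : vert (k + 1) ⟶ vert k)
    (y : vert (k + 1) ⟶ vert (k + 1 + 1)) (hy : y ∈ A _ _),
    letter k = Sum.inl x → letter (k + 1) = Sum.inr ⟨y, hy⟩ →
    (⟨vert (k + 1), vert k, x⟩ : Σ i j : V, i ⟶ j) ≠ ⟨vert (k + 1), vert (k + 1 + 1), y⟩
  reduced₂ : ∀ (k : ZMod n) (x : vert k ⟶ vert (k + 1)) (hx : x ∈ A _ _)
    (y : vert (k + 1 + 1) ⟶ vert (k + 1)),
    letter k = Sum.inr ⟨x, hx⟩ → letter (k + 1) = Sum.inl y →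
    (⟨vert k, vert (k + 1), x⟩ : Σ i j : V, i ⟶ j) ≠ ⟨vert (k + 1 + 1), vert (k + 1), y⟩

theorem List.IsChain.getElem_zmod_succ {α : Type*} {R : α → α → Prop} {a : α} {l : List α}
    (h : (a :: l ++ [a]).IsChain R) (k : ZMod (l.length + 1)) :
    R ((a :: l)[k.val]'k.val_lt) ((a :: l)[(k + 1).val]'(k + 1).val_lt) := by
  have hR := List.isChain_iff_getElem.mp h k.val (by have := k.val_lt; simp; omega)
  have hk : (k + 1).val = (k.val + 1) % (l.length + 1) := by
    rw [ZMod.val_add, ZMod.val_one_eq_one_mod, Nat.add_mod_mod]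
  simp only [List.getElem_append_left (as := a :: l) (bs := [a]) k.val_lt] at hR
  rcases Nat.lt_or_ge (k.val + 1) (l.length + 1) with hlt | hge
  · convert hR using 1
    simp [hk, Nat.mod_eq_of_lt hlt, List.getElem_append_left (show k.val < l.length by omega)]
  · have hlast : k.val + 1 = l.length + 1 := by have := k.val_lt; omega
    simpa [hk, hlast] using hR

theorem exists_finEquiv_lt_of_acyclic {α : Type*} [Finite α] {r : α → α → Prop}
    (hr : ∀ a, ¬ Relation.TransGen r a a) :
    ∃ (s : ℕ) (e : Fin s ≃ α), ∀ p q, r (e p) (e q) → p < q := by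
  let _ : PartialOrder α :=
    { le := Relation.ReflTransGen r
      le_refl := fun _ => .refl
      le_trans := fun _ _ _ => .trans
      le_antisymm := fun a b hab hba =>
        (Relation.reflTransGen_iff_eq_or_transGen.mp hab).elim Eq.symm
          fun hba' => absurd (hba'.trans_right hba) (hr b) }
  let _ : Fintype (LinearExtension α) := Fintype.ofFinite α
  let e := monoEquivOfFin (LinearExtension α) rfl
  refine ⟨_, e.toEquiv, fun p q hpq => e.lt_iff_lt.mp ?_⟩
  have hle : toLinearExtension (α := α) (e p) ≤ toLinearExtension (e q) :=
    toLinearExtension.monotone (Relation.ReflTransGen.single hpq)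
  exact lt_of_le_of_ne hle fun h => hr _ (.single (h ▸ hpq :))

namespace OrientedCycle

variable {V : Type v} [Quiver.{v+1} V] (I : ∀ i j : V, Set (i ⟶ j))

abbrev IArrow := {x : Σ i j : V, i ⟶ j // x.2.2 ∈ I x.1 x.2.1}

/-- `inl a` is the arrow `a`, `inr a` the formal inverse `a⁻¹` of an arrow `a ∈ I`. -/
abbrev Letter := (Σ i j : V, i ⟶ j) ⊕ IArrow I

variable {I}

namespace Letter

def head : Letter I → V
  | .inl a => a.2.1
  | .inr a => a.1.1

def tail : Letter I → V
  | .inl a => a.1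
  | .inr a => a.1.2.1

def arrow : Letter I → Σ i j : V, i ⟶ j :=
  Sum.elim id Subtype.val

def IsInverse (l l' : Letter I) : Prop :=
  l.isLeft ≠ l'.isLeft ∧ l.arrow = l'.arrow

def Adjacent (l l' : Letter I) : Prop :=
  l.tail = l'.head ∧ ¬ l.IsInverse l'

def orient : (l : Letter I) → {u v : V} → l.tail = u → l.head = v →
    (u ⟶ v) ⊕ {a : v ⟶ u // a ∈ I v u}
  | .inl ⟨_, _, a⟩, _, _, rfl, rfl => .inl a
  | .inr ⟨⟨_, _, a⟩, ha⟩, _, _, rfl, rfl => .inr ⟨a, ha⟩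

theorem orient_eq_inl {l : Letter I} {u v : V} {hu : l.tail = u} {hv : l.head = v}
    {x : u ⟶ v} (h : l.orient hu hv = .inl x) : l.isLeft ∧ l.arrow = ⟨u, v, x⟩ := by
  rcases l with ⟨_, _, a⟩ | ⟨⟨_, _, a⟩, ha⟩ <;> subst hu hv <;> cases h
  exact ⟨rfl, rfl⟩

theorem orient_eq_inr {l : Letter I} {u v : V} {hu : l.tail = u} {hv : l.head = v}
    {y : v ⟶ u} {hy : y ∈ I v u} (h : l.orient hu hv = .inr ⟨y, hy⟩) :
    l.isLeft = false ∧ l.arrow = ⟨v, u, y⟩ := by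
  rcases l with ⟨_, _, a⟩ | ⟨⟨_, _, a⟩, ha⟩ <;> subst hu hv <;> cases h
  exact ⟨rfl, rfl⟩

end Letter

open Letter

def ofAdjacent (n : ℕ) [NeZero n] (w : ZMod n → Letter I)
    (hw : ∀ k, (w k).Adjacent (w (k + 1))) : OrientedCycle I where
  n := n
  npos := Nat.pos_of_neZero n
  vert k := (w k).head
  letter k := (w k).orient (hw k).1 rfl
  reduced₁ k _ _ _ hx hy heq := by
    obtain ⟨hx₁, hx₂⟩ := orient_eq_inl hx
    obtain ⟨hy₁, hy₂⟩ := orient_eq_inr hy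
    exact (hw k).2 ⟨by simp [hx₁, hy₁], hx₂.trans (heq.trans hy₂.symm)⟩
  reduced₂ k _ _ _ hx hy heq := by
    obtain ⟨hx₁, hx₂⟩ := orient_eq_inr hx
    obtain ⟨hy₁, hy₂⟩ := orient_eq_inl hy
    exact (hw k).2 ⟨by simp [hx₁, hy₁], hx₂.trans (heq.trans hy₂.symm)⟩

def ofIsChain (a : Letter I) (l : List (Letter I)) (h : (a :: l ++ [a]).IsChain Adjacent) :
    OrientedCycle I :=
  ofAdjacent (l.length + 1) (fun k => (a :: l)[k.val]'k.val_lt) h.getElem_zmod_succ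

/-- The letters of a path, read from its end to its start, as in an oriented cycle. -/
def pathLetters : {u v : V} → Path u v → List (Letter I)
  | _, _, .nil => []
  | _, _, .cons p e => .inl ⟨_, _, e⟩ :: pathLetters p

variable (I) in
def Links (x y : IArrow I) : Prop :=
  ∃ p : Path x.1.1 y.1.2.1,
    (¬ ∃ r : Path x.1.2.1 y.1.2.1, p = (x.1.2.2).toPath.comp r) ∧
    (¬ ∃ r : Path x.1.1 y.1.1, p = r.cons y.1.2.2)

theorem isChain_pathLetters_append_inr (y : IArrow I) {v : V} (p : Path y.1.1 v)
    (hp : ¬ ∃ r : Path y.1.2.1 v, p = (y.1.2.2).toPath.comp r) :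
    (pathLetters p ++ [Sum.inr y]).IsChain Adjacent := by
  obtain ⟨⟨i, j, a⟩, ha⟩ := y
  induction p with
  | nil => simp [pathLetters]
  | cons q e ih =>
    rw [pathLetters, List.cons_append, List.isChain_cons]
    refine ⟨?_, ih fun ⟨r, hr⟩ => hp ⟨r.cons e, by rw [hr]; rfl⟩⟩
    cases q with
    | nil =>
      simp only [pathLetters, List.nil_append, List.head?_cons, Option.mem_some_iff, forall_eq']
      refine ⟨rfl, fun hinv => hp ?_⟩
      obtain ⟨rfl, he⟩ := Sigma.mk.inj_iff.mp (eq_of_heq (Sigma.mk.inj_iff.mp hinv.2).2)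
      have := eq_of_heq he
      subst e
      exact ⟨.nil, rfl⟩
    | cons q' e' =>
      simp only [pathLetters, List.cons_append, List.head?_cons, Option.mem_some_iff, forall_eq']
      exact ⟨rfl, fun hinv => hinv.1 rfl⟩

theorem isChain_inr_cons_pathLetters_append_inr {x y : IArrow I} (p : Path y.1.1 x.1.2.1)
    (hstart : ¬ ∃ r : Path y.1.2.1 x.1.2.1, p = (y.1.2.2).toPath.comp r)
    (hend : ¬ ∃ r : Path y.1.1 x.1.1, p = r.cons x.1.2.2) :
    (Sum.inr x :: (pathLetters p ++ [Sum.inr y])).IsChain Adjacent := by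
  refine List.isChain_cons.mpr ⟨?_, isChain_pathLetters_append_inr y p hstart⟩
  obtain ⟨⟨i, j, a⟩, ha⟩ := x
  obtain ⟨⟨i', j', b⟩, hb⟩ := y
  cases p with
  | nil =>
    simp only [pathLetters, List.nil_append, List.head?_cons, Option.mem_some_iff, forall_eq']
    exact ⟨rfl, fun hinv => hinv.1 rfl⟩
  | cons q e =>
    simp only [pathLetters, List.cons_append, List.head?_cons, Option.mem_some_iff, forall_eq']
    refine ⟨rfl, fun hinv => hend ?_⟩
    obtain ⟨rfl, he⟩ := Sigma.mk.inj_iff.mp hinv.2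
    have := eq_of_heq (Sigma.mk.inj_iff.mp (eq_of_heq he)).2
    subst e
    exact ⟨q, rfl⟩

variable (I) in
def ReducedWord (x z : IArrow I) : Prop :=
  ∃ l : List (Letter I), (Sum.inr x :: l ++ [Sum.inr z]).IsChain Adjacent

theorem Links.reducedWord {x y : IArrow I} (h : Links I y x) : ReducedWord I x y :=
  let ⟨p, hstart, hend⟩ := h
  ⟨pathLetters p, isChain_inr_cons_pathLetters_append_inr p hstart hend⟩

theorem ReducedWord.trans {x y z : IArrow I} (hxy : ReducedWord I x y) (hyz : ReducedWord I y z) :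
    ReducedWord I x z := by
  obtain ⟨l₁, h₁⟩ := hxy
  obtain ⟨l₂, h₂⟩ := hyz
  refine ⟨l₁ ++ Sum.inr y :: l₂, ?_⟩
  simpa using h₁.append_overlap h₂ (List.cons_ne_nil _ _)

theorem reducedWord_of_transGen {x y : IArrow I} (h : Relation.TransGen (Links I) x y) :
    ReducedWord I y x := by
  induction h with
  | single h => exact h.reducedWord
  | tail _ h ih => exact h.reducedWord.trans ih

theorem not_transGen_links_self (hI : IsEmpty (OrientedCycle I)) (x : IArrow I) :
    ¬ Relation.TransGen (Links I) x x := fun h =>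
  let ⟨l, hl⟩ := reducedWord_of_transGen h
  hI.false (ofIsChain (Sum.inr x) l hl)

end OrientedCycle

/-- If a finite quiver has no oriented `I`-cycles, then `I` can be enumerated as
`a_1, …, a_s` so that for `i ≤ j` every path from `t(a_j)` to `h(a_i)` has the form
`q a_j` or `a_i q`. -/
theorem enumeration_of_no_oriented_cycles {V : Type v} [Quiver.{v+1} V]
    [Fintype V] [∀ i j : V, Fintype (i ⟶ j)]
    (I : ∀ i j : V, Set (i ⟶ j)) (hnc : IsEmpty (OrientedCycle I)) :
    ∃ (s : ℕ) (e : Fin s ≃ {x : Σ i j : V, i ⟶ j // x.2.2 ∈ I x.1 x.2.1}),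
      ∀ p q : Fin s, p ≤ q →
        ∀ path : Path (e q).1.1 (e p).1.2.1,
          (∃ r : Path (e q).1.2.1 (e p).1.2.1,
              path = ((e q).1.2.2).toPath.comp r) ∨
          (∃ r : Path (e q).1.1 (e p).1.1, path = r.cons (e p).1.2.2) := by
  obtain ⟨s, e, he⟩ := exists_finEquiv_lt_of_acyclic (OrientedCycle.not_transGen_links_self hnc)
  refine ⟨s, e, fun p q hpq path => ?_⟩
  by_contra hbad
  rw [not_or] at hbad
  exact (he q p ⟨path, hbad⟩).not_ge hpq
end
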